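/- Under the assumptions of the block-decoupling construction (ξ solving G + L₁ conj(ξ) − ξ L₂ − ξ Gᵀ conj(ξ) = 0), the lower-right block of Uᴴ M conj(U) equals (1+ξᴴξ)^{-1/2}(L₂ + ξᴴG + Gᵀ conj(ξ) + ξᴴ L₁ conj(ξ))(1+ξᵀ conj(ξ))^{-1/2}, and this also equals (1+ξᴴξ)^{1/2}(L₂ + Gᵀ conj(ξ))(1+ξᵀ conj(ξ))^{-1/2}. -/

import Mathlib

/-!
Only the second block row of `Uᴴ` and the second block column of `conj U` enter the lower-right
block, which gives the first expression. Multiplying the Riccati equation for `ξ` on the left by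
`ξᴴ` shows that its middle factor equals `(1 + ξᴴξ)(L₂ + Gᵀ conj ξ)`, and `1 + ξᴴξ = S * S` for
`S = (1 + ξᴴξ)^{1/2}` cancels the outer `S⁻¹`.
-/

open Matrix ComplexOrder

/-- The old Mathlib `Matrix.PosSemidef.sqrt` (removed upstream), restated with its old definition. -/
noncomputable def Matrix.PosSemidef.sqrt {n : Type*} [Fintype n] [DecidableEq n]
    {𝕜 : Type*} [RCLike 𝕜] {A : Matrix n n 𝕜} (hA : A.PosSemidef) : Matrix n n 𝕜 :=
  hA.1.eigenvectorUnitary.1 * diagonal ((↑) ∘ (√·) ∘ hA.1.eigenvalues) *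
  (star hA.1.eigenvectorUnitary : Matrix n n 𝕜)

/-- The positive semidefinite square root of `1 + ξ * ξᴴ`. -/
noncomputable def sqrtOnePlusSelfMulConjTranspose {n₁ n₂ : ℕ}
    (ξ : Matrix (Fin n₁) (Fin n₂) ℂ) : Matrix (Fin n₁) (Fin n₁) ℂ :=
  Matrix.PosSemidef.sqrt (Matrix.PosSemidef.add Matrix.PosSemidef.one
    (Matrix.posSemidef_self_mul_conjTranspose ξ))

/-- The positive semidefinite square root of `1 + ξᴴ * ξ`. -/
noncomputable def sqrtOnePlusConjTransposeMulSelf {n₁ n₂ : ℕ}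
    (ξ : Matrix (Fin n₁) (Fin n₂) ℂ) : Matrix (Fin n₂) (Fin n₂) ℂ :=
  Matrix.PosSemidef.sqrt (Matrix.PosSemidef.add Matrix.PosSemidef.one
    (Matrix.posSemidef_conjTranspose_mul_self ξ))

/-- The standard unitary block matrix built from `ξ`. -/
noncomputable def blockUnitary {n₁ n₂ : ℕ} (ξ : Matrix (Fin n₁) (Fin n₂) ℂ) :
    Matrix (Fin n₁ ⊕ Fin n₂) (Fin n₁ ⊕ Fin n₂) ℂ :=
  Matrix.fromBlocks
    (sqrtOnePlusSelfMulConjTranspose ξ)⁻¹ (ξ * (sqrtOnePlusConjTransposeMulSelf ξ)⁻¹)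
    (-(ξᴴ * (sqrtOnePlusSelfMulConjTranspose ξ)⁻¹)) (sqrtOnePlusConjTransposeMulSelf ξ)⁻¹

namespace Matrix.PosSemidef

variable {n 𝕜 : Type*} [Fintype n] [DecidableEq n] [RCLike 𝕜] {A : Matrix n n 𝕜}

theorem isHermitian_sqrt (hA : A.PosSemidef) : hA.sqrt.IsHermitian := by
  rw [Matrix.PosSemidef.sqrt, star_eq_conjTranspose]
  refine isHermitian_mul_mul_conjTranspose _ (isHermitian_diagonal_iff.mpr fun i => ?_)
  simp [isSelfAdjoint_iff]

theorem sqrt_mul_self (hA : A.PosSemidef) : hA.sqrt * hA.sqrt = A := by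
  set U : Matrix n n 𝕜 := (hA.1.eigenvectorUnitary : Matrix n n 𝕜)
  set D : Matrix n n 𝕜 := diagonal ((↑) ∘ (√·) ∘ hA.1.eigenvalues)
  have hDD : D * D = diagonal (RCLike.ofReal ∘ hA.1.eigenvalues) := by
    rw [diagonal_mul_diagonal]
    congr 1
    funext i
    simp [← RCLike.ofReal_mul, Real.mul_self_sqrt (hA.eigenvalues_nonneg i)]
  calc hA.sqrt * hA.sqrt = U * (D * (star U * U) * D) * star U := by
        simp only [Matrix.PosSemidef.sqrt, U, D, Matrix.mul_assoc]
    _ = A := by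
        rw [Unitary.coe_star_mul_self, Matrix.mul_one, hDD]
        exact hA.1.spectral_theorem.symm

theorem isUnit_det_sqrt (hA : A.PosSemidef) (hdet : IsUnit A.det) : IsUnit hA.sqrt.det := by
  rw [← hA.sqrt_mul_self, det_mul] at hdet
  exact isUnit_of_mul_isUnit_left hdet

end Matrix.PosSemidef

theorem one_add_mul_mul_eq_of_riccati {m n R : Type*} [Fintype m] [Fintype n] [DecidableEq n]
    [Ring R] {P : Matrix m m R} {Q ξ X : Matrix m n R} {T : Matrix n m R} {L : Matrix n n R}
    (Y : Matrix n m R) (hξ : Q + P * X - ξ * L - ξ * T * X = 0) :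
    (1 + Y * ξ) * (L + T * X) = L + Y * Q + T * X + Y * P * X := by
  have hYξ : Y * ξ * L + Y * ξ * T * X = Y * Q + Y * P * X := by
    have h := congrArg (Y * ·) hξ
    simp only [Matrix.mul_add, Matrix.mul_sub, Matrix.mul_zero, ← Matrix.mul_assoc] at h
    rw [eq_comm, ← sub_eq_zero, ← h]
    abel
  rw [add_mul, one_mul, Matrix.mul_add, ← Matrix.mul_assoc (Y * ξ), hYξ]
  abel

section BlockUnitary

variable {n₁ n₂ : ℕ} (ξ : Matrix (Fin n₁) (Fin n₂) ℂ)

theorem sqrtOnePlusConjTransposeMulSelf_mul_self :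
    sqrtOnePlusConjTransposeMulSelf ξ * sqrtOnePlusConjTransposeMulSelf ξ = 1 + ξᴴ * ξ :=
  PosSemidef.sqrt_mul_self _

theorem isUnit_det_sqrtOnePlusConjTransposeMulSelf :
    IsUnit (sqrtOnePlusConjTransposeMulSelf ξ).det :=
  PosSemidef.isUnit_det_sqrt _
    ((isUnit_iff_isUnit_det _).mp
      (PosDef.one.add_posSemidef (posSemidef_conjTranspose_mul_self ξ)).isUnit)

theorem toBlocks₂₂_blockUnitary_conjTranspose_mul_fromBlocks_mul_map
    (P : Matrix (Fin n₁) (Fin n₁) ℂ) (Q : Matrix (Fin n₁) (Fin n₂) ℂ)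
    (T : Matrix (Fin n₂) (Fin n₁) ℂ) (L : Matrix (Fin n₂) (Fin n₂) ℂ) :
    ((blockUnitary ξ)ᴴ * fromBlocks P Q T L * (blockUnitary ξ).map (starRingEnd ℂ)).toBlocks₂₂ =
      (sqrtOnePlusConjTransposeMulSelf ξ)⁻¹
        * (L + ξᴴ * Q + T * ξ.map (starRingEnd ℂ) + ξᴴ * P * ξ.map (starRingEnd ℂ))
        * ((sqrtOnePlusConjTransposeMulSelf ξ)⁻¹).map (starRingEnd ℂ) := by
  have hS : ((sqrtOnePlusConjTransposeMulSelf ξ)⁻¹)ᴴ = (sqrtOnePlusConjTransposeMulSelf ξ)⁻¹ :=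
    (PosSemidef.isHermitian_sqrt _).inv
  simp only [blockUnitary, fromBlocks_conjTranspose, fromBlocks_map, fromBlocks_multiply,
    toBlocks_fromBlocks₂₂, conjTranspose_mul, Matrix.map_mul, hS, Matrix.mul_add, Matrix.add_mul,
    Matrix.mul_assoc]
  abel

end BlockUnitary

theorem block_decoupling_lower_right_block_general (n₁ n₂ : ℕ)
    (L₁ : Matrix (Fin n₁) (Fin n₁) ℂ) (L₂ : Matrix (Fin n₂) (Fin n₂) ℂ)
    (G : Matrix (Fin n₁) (Fin n₂) ℂ)
    (ξ : Matrix (Fin n₁) (Fin n₂) ℂ)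
    (hξ : G + L₁ * ξ.map (starRingEnd ℂ) - ξ * L₂ - ξ * Gᵀ * ξ.map (starRingEnd ℂ) = 0) :
    ((blockUnitary ξ)ᴴ * Matrix.fromBlocks L₁ G Gᵀ L₂
        * (blockUnitary ξ).map (starRingEnd ℂ)).toBlocks₂₂ =
      (sqrtOnePlusConjTransposeMulSelf ξ)⁻¹
        * (L₂ + ξᴴ * G + Gᵀ * ξ.map (starRingEnd ℂ) + ξᴴ * L₁ * ξ.map (starRingEnd ℂ))
        * ((sqrtOnePlusConjTransposeMulSelf ξ)⁻¹).map (starRingEnd ℂ) ∧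
    ((blockUnitary ξ)ᴴ * Matrix.fromBlocks L₁ G Gᵀ L₂
        * (blockUnitary ξ).map (starRingEnd ℂ)).toBlocks₂₂ =
      sqrtOnePlusConjTransposeMulSelf ξ * (L₂ + Gᵀ * ξ.map (starRingEnd ℂ))
        * ((sqrtOnePlusConjTransposeMulSelf ξ)⁻¹).map (starRingEnd ℂ) := by
  set S := sqrtOnePlusConjTransposeMulSelf ξ
  have hblock := toBlocks₂₂_blockUnitary_conjTranspose_mul_fromBlocks_mul_map ξ L₁ G Gᵀ L₂
  refine ⟨hblock, hblock.trans ?_⟩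
  rw [← one_add_mul_mul_eq_of_riccati ξᴴ hξ, ← sqrtOnePlusConjTransposeMulSelf_mul_self,
    ← Matrix.mul_assoc, ← Matrix.mul_assoc,
    nonsing_inv_mul S (isUnit_det_sqrtOnePlusConjTransposeMulSelf ξ), Matrix.one_mul]

/-- Under the block-decoupling construction, the lower-right block of `Uᴴ M conj(U)` equals
`(1+ξᴴξ)^{-1/2}(L₂ + ξᴴG + Gᵀconj(ξ) + ξᴴL₁conj(ξ))(1+ξᵀconj(ξ))^{-1/2}`, which also equals
`(1+ξᴴξ)^{1/2}(L₂ + Gᵀconj(ξ))(1+ξᵀconj(ξ))^{-1/2}`. -/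
theorem block_decoupling_lower_right_block (n₁ n₂ : ℕ)
    (L₁ : Matrix (Fin n₁) (Fin n₁) ℂ) (L₂ : Matrix (Fin n₂) (Fin n₂) ℂ)
    (G : Matrix (Fin n₁) (Fin n₂) ℂ) (hL₁ : L₁ᵀ = L₁) (hL₂ : L₂ᵀ = L₂)
    (ξ : Matrix (Fin n₁) (Fin n₂) ℂ)
    (hξ : G + L₁ * ξ.map (starRingEnd ℂ) - ξ * L₂ - ξ * Gᵀ * ξ.map (starRingEnd ℂ) = 0) :
    ((blockUnitary ξ)ᴴ * Matrix.fromBlocks L₁ G Gᵀ L₂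
        * (blockUnitary ξ).map (starRingEnd ℂ)).toBlocks₂₂ =
      (sqrtOnePlusConjTransposeMulSelf ξ)⁻¹
        * (L₂ + ξᴴ * G + Gᵀ * ξ.map (starRingEnd ℂ) + ξᴴ * L₁ * ξ.map (starRingEnd ℂ))
        * ((sqrtOnePlusConjTransposeMulSelf ξ)⁻¹).map (starRingEnd ℂ) ∧
    ((blockUnitary ξ)ᴴ * Matrix.fromBlocks L₁ G Gᵀ L₂
        * (blockUnitary ξ).map (starRingEnd ℂ)).toBlocks₂₂ =
      sqrtOnePlusConjTransposeMulSelf ξ * (L₂ + Gᵀ * ξ.map (starRingEnd ℂ))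
        * ((sqrtOnePlusConjTransposeMulSelf ξ)⁻¹).map (starRingEnd ℂ) :=
  block_decoupling_lower_right_block_general n₁ n₂ L₁ L₂ G ξ hξ
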